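/- With the notation of a Fredholm fan (Lᵢ = Ψᵢ(Hᵢ), Ψᵢ almost commuting with all Pⱼ), the index of Ψ₁P₁ + ⋯ + ΨₙPₙ equals the sum ∑ᵢ ind(PᵢΨᵢ|_{Hᵢ} : Hᵢ → Hᵢ) = ∑ᵢ ind(Pᵢ|_{Lᵢ} : Lᵢ → Hᵢ). -/

import Mathlib

/-!
Modulo compact operators the `Pᵢ` are orthogonal idempotents summing to `1` and `Ψᵢ` commutes
with `Pᵢ`, so in the Calkin algebra `∑ ΨᵢPᵢ` is the product of the units `Tᵢ = 1 - Pᵢ + ΨᵢPᵢ`.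
On operators that are invertible modulo compacts the index only depends on the Calkin class and
is additive under products; both facts reduce to `ind (1 + K) = 0` for compact `K`, which holds
because `1 + K` is an invertible operator times `1 + F` with `F` of finite rank. Hence
`ind ∑ ΨᵢPᵢ = ∑ ind Tᵢ`. Finally `Tᵢ ≡ 1 - Pᵢ + PᵢΨᵢPᵢ`, which is the compression `PᵢΨᵢ|Hᵢ` on
`Hᵢ` and the identity on `ker Pᵢ`, and `Ψᵢ : Hᵢ ≃ Lᵢ` identifies the compression with `Pᵢ|Lᵢ`.
-/

open Submodule Module

/-- A bounded operator between normed spaces is Fredholm: finite-dimensional kernel,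
closed range of finite codimension. -/
def IsFredholmOp {E F : Type*} [NormedAddCommGroup E] [NormedSpace ℂ E]
    [NormedAddCommGroup F] [NormedSpace ℂ F] (T : E →L[ℂ] F) : Prop :=
  FiniteDimensional ℂ (LinearMap.ker (T : E →ₗ[ℂ] F)) ∧ IsClosed (LinearMap.range (T : E →ₗ[ℂ] F) : Set F) ∧
    FiniteDimensional ℂ (F ⧸ LinearMap.range (T : E →ₗ[ℂ] F))

/-- The index of an operator: dim ker − dim coker. -/
noncomputable def opIndex {E F : Type*} [NormedAddCommGroup E] [NormedSpace ℂ E]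
    [NormedAddCommGroup F] [NormedSpace ℂ F] (T : E →L[ℂ] F) : ℤ :=
  (finrank ℂ (LinearMap.ker (T : E →ₗ[ℂ] F)) : ℤ) - finrank ℂ (F ⧸ LinearMap.range (T : E →ₗ[ℂ] F))

/-- A pair of subspaces is Fredholm: finite-dimensional intersection and
closed sum of finite codimension. -/
def IsFredholmPair {H : Type*} [NormedAddCommGroup H] [NormedSpace ℂ H]
    (A B : Submodule ℂ H) : Prop :=
  FiniteDimensional ℂ ↥(A ⊓ B) ∧ IsClosed ((A ⊔ B : Submodule ℂ H) : Set H) ∧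
    FiniteDimensional ℂ (H ⧸ (A ⊔ B))

/-- Index of a Fredholm pair: dim(A ∩ B) − codim(A + B). -/
noncomputable def pairIndex {H : Type*} [NormedAddCommGroup H] [NormedSpace ℂ H]
    (A B : Submodule ℂ H) : ℤ :=
  (finrank ℂ ↥(A ⊓ B) : ℤ) - finrank ℂ (H ⧸ (A ⊔ B))

namespace LinearMap

variable {K V W : Type*} [Field K] [AddCommGroup V] [Module K V] [AddCommGroup W] [Module K W]

def HasFiniteIndex (f : V →ₗ[K] W) : Prop :=
  FiniteDimensional K (ker f) ∧ FiniteDimensional K (W ⧸ range f)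

section Comp

variable {U : Type*} [AddCommGroup U] [Module K U]

theorem HasFiniteIndex.comp {f : U →ₗ[K] V} {g : V →ₗ[K] W} (hf : f.HasFiniteIndex)
    (hg : g.HasFiniteIndex) : (g ∘ₗ f).HasFiniteIndex := by
  obtain ⟨_, _⟩ := hf
  obtain ⟨_, _⟩ := hg
  exact ⟨by rw [ker_comp]; infer_instance, by rw [range_comp]; infer_instance⟩

theorem HasFiniteIndex.index_comp {f : U →ₗ[K] V} {g : V →ₗ[K] W} (hf : f.HasFiniteIndex)
    (hg : g.HasFiniteIndex) : (g ∘ₗ f).index = g.index + f.index := by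
  obtain ⟨_, _⟩ := hf
  obtain ⟨_, _⟩ := hg
  exact LinearMap.index_comp g

theorem index_eq_of_eq_comp_linearEquiv {f : V →ₗ[K] W} {g : U →ₗ[K] W} (e : U ≃ₗ[K] V)
    (h : g = f ∘ₗ (e : U →ₗ[K] V)) : g.index = f.index := by
  rw [h, index, index, LinearEquiv.range_comp, ker_comp, comap_equiv_eq_map_symm,
    LinearEquiv.finrank_map_eq]

end Comp

/-- `T` has the same kernel and cokernel as its restriction to `M`. -/
theorem hasFiniteIndex_and_index_eq_zero_of_sup_eq_top (T : V →ₗ[K] V) {M N : Submodule K V}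
    [FiniteDimensional K M] (hM : ∀ x ∈ M, T x ∈ M) (hN : ∀ w ∈ N, T w = w) (hMN : M ⊔ N = ⊤) :
    T.HasFiniteIndex ∧ T.index = 0 := by
  have hdecomp : ∀ x, ∃ m ∈ M, ∃ w ∈ N, m + w = x := fun x => Submodule.mem_sup.1 (hMN ▸ mem_top)
  have hker : ker T ≤ M := by
    intro x hx
    obtain ⟨m, hm, w, hw, rfl⟩ := hdecomp x
    have : w = -T m := by
      rw [← hN w hw, eq_neg_iff_add_eq_zero, add_comm, ← map_add]
      exact hx
    exact add_mem hm (this ▸ neg_mem (hM m hm))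
  have hrange : (range T).comap M.subtype = range (T.restrict hM) := by
    ext ⟨x, hx⟩
    constructor
    · rintro ⟨y, hy⟩
      obtain ⟨m, hm, w, hw, rfl⟩ := hdecomp y
      have hwM : w ∈ M := by
        have : w = x - T m := by
          rw [← hN w hw, eq_sub_iff_add_eq', ← map_add]
          exact hy
        exact this ▸ sub_mem hx (hM m hm)
      exact ⟨⟨m + w, add_mem hm hwM⟩, Subtype.ext hy⟩
    · rintro ⟨y, hy⟩
      exact ⟨y, congrArg Subtype.val hy⟩
  let φ : M →ₗ[K] V ⧸ range T := (range T).mkQ ∘ₗ M.subtype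
  have hφ : Function.Surjective φ := by
    intro x
    obtain ⟨x, rfl⟩ := Submodule.mkQ_surjective _ x
    obtain ⟨m, hm, w, hw, rfl⟩ := hdecomp x
    refine ⟨⟨m, hm⟩, (Submodule.Quotient.eq _).2 ⟨-w, ?_⟩⟩
    simp [hN w hw]
  have eker : ker (T.restrict hM) ≃ₗ[K] ker T :=
    (LinearEquiv.ofEq _ _ (ker_restrict hM)).trans (Submodule.comapSubtypeEquivOfLe hker)
  have ecoker : (M ⧸ range (T.restrict hM)) ≃ₗ[K] V ⧸ range T :=
    (Submodule.quotEquivOfEq _ _ (by rw [← hrange, ker_comp, ker_mkQ])).trans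
      (quotKerEquivOfSurjective φ hφ)
  refine ⟨⟨eker.finiteDimensional, ecoker.finiteDimensional⟩, ?_⟩
  rw [index, ← eker.finrank_eq, ← ecoker.finrank_eq, ← index, index_eq_of_finiteDimensional,
    sub_self]

theorem hasFiniteIndex_and_index_id_add_eq_zero (F : V →ₗ[K] V) [FiniteDimensional K (range F)] :
    (id + F).HasFiniteIndex ∧ (id + F).index = 0 := by
  obtain ⟨C, hC⟩ := (ker F).exists_isCompl
  have : FiniteDimensional K C :=
    (F.quotKerEquivRange.symm.trans (Submodule.quotientEquivOfIsCompl _ _ hC)).finiteDimensional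
  refine (id + F).hasFiniteIndex_and_index_eq_zero_of_sup_eq_top (M := range F ⊔ C) (N := ker F)
    (fun x hx => add_mem hx (Submodule.mem_sup_left (mem_range_self F x))) (fun w hw => ?_) ?_
  · simp [mem_ker.1 hw]
  · rw [sup_assoc, sup_comm C, hC.sup_eq_top, sup_top_eq]

theorem index_id_sub_add_mul_mul {R M : Type*} [Ring R] [AddCommGroup M] [Module R M]
    {P : M →ₗ[R] M} (Q : M →ₗ[R] M) (hP : IsIdempotentElem P) :
    (id - P + P * Q * P).index =
      ((P ∘ₗ Q ∘ₗ (range P).subtype).codRestrict (range P) fun _ => mem_range_self P _).index := by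
  set B := id - P + P * Q * P
  set A := (P ∘ₗ Q ∘ₗ (range P).subtype).codRestrict (range P) fun _ => mem_range_self P _
  have hPP : ∀ x, P (P x) = P x := LinearMap.congr_fun hP.eq
  have hfix : ∀ x ∈ range P, P x = x := by rintro _ ⟨y, rfl⟩; exact hPP y
  have hB : ∀ x, B x = x - P x + P (Q (P x)) := fun _ => rfl
  have hPB : ∀ x, P (B x) = P (Q (P x)) := by simp [hB, hPP]
  have hker_le : ker B ≤ range P := by
    intro x hx
    have h₀ := hPB x
    rw [mem_ker.1 hx, map_zero] at h₀
    have h₁ := mem_ker.1 hx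
    rw [hB, ← h₀, add_zero, sub_eq_zero] at h₁
    exact ⟨x, h₁.symm⟩
  have hker : (ker B).comap (range P).subtype = ker A := by
    ext ⟨x, hx⟩
    simp only [Submodule.mem_comap, mem_ker, Submodule.coe_subtype, hB, hfix x hx, sub_self,
      zero_add, Subtype.ext_iff]
    rfl
  let φ := (range A).mkQ ∘ₗ P.rangeRestrict
  have hφ : Function.Surjective φ :=
    (Submodule.mkQ_surjective _).comp (surjective_rangeRestrict P)
  have hrange : ker φ = range B := by
    ext x
    simp only [φ, mem_ker, comp_apply, Submodule.mkQ_apply, Submodule.Quotient.mk_eq_zero,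
      mem_range, Subtype.ext_iff]
    constructor
    · rintro ⟨⟨m, hm⟩, hAm⟩
      have hPz : P (x - P x + m) = m := by
        rw [map_add, map_sub, hPP, sub_self, zero_add, hfix m hm]
      refine ⟨x - P x + m, ?_⟩
      rw [hB, hPz, show P (Q m) = P x from hAm]
      abel
    · rintro ⟨z, rfl⟩
      exact ⟨⟨P z, mem_range_self P z⟩, (hPB z).symm⟩
  rw [index, index, ← (Submodule.comapSubtypeEquivOfLe hker_le).finrank_eq, hker,
    ← ((Submodule.quotEquivOfEq _ _ hrange.symm).trans (quotKerEquivOfSurjective φ hφ)).finrank_eq]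

end LinearMap

theorem LinearEquiv.hasFiniteIndex {K V W : Type*} [Field K] [AddCommGroup V] [Module K V]
    [AddCommGroup W] [Module K W] (e : V ≃ₗ[K] W) : (e : V →ₗ[K] W).HasFiniteIndex := by
  rw [LinearMap.HasFiniteIndex, LinearEquiv.ker, LinearEquiv.range]
  exact ⟨inferInstance, inferInstance⟩

theorem opIndex_one_sub_add_mul_mul {E : Type*} [NormedAddCommGroup E] [NormedSpace ℂ E]
    {P : E →L[ℂ] E} (Q : E →L[ℂ] E) (hP : IsIdempotentElem P) :
    opIndex (1 - P + P * Q * P) = opIndex ((P.comp (Q.comp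
      (LinearMap.range (P : E →ₗ[ℂ] E)).subtypeL)).codRestrict (LinearMap.range (P : E →ₗ[ℂ] E))
      fun _ => LinearMap.mem_range_self (P : E →ₗ[ℂ] E) _) :=
  LinearMap.index_id_sub_add_mul_mul (Q : E →ₗ[ℂ] E) (hP.map ContinuousLinearMap.toLinearMapRingHom)

section FanAlgebra

variable {R : Type*} [Ring R]

theorem one_sub_add_mul_mul_one_sub_add_mul {p u v : R} (hp : IsIdempotentElem p)
    (hv : Commute v p) (huv : u * v = 1) : (1 - p + u * p) * (1 - p + v * p) = 1 := by
  have hpvp : p * v * p = v * p := by rw [← hv.eq, mul_assoc, hp.eq]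
  calc (1 - p + u * p) * (1 - p + v * p)
      = 1 - p - (p - p * p) + (v * p - p * v * p) + (u * p - u * (p * p)) + u * (p * v * p) := by
        noncomm_ring
    _ = 1 := by rw [hpvp, hp.eq, ← mul_assoc, huv, one_mul]; abel

theorem isUnit_one_sub_add_mul {p u : R} (hp : IsIdempotentElem p) (hu : IsUnit u)
    (hup : Commute u p) : IsUnit (1 - p + u * p) := by
  obtain ⟨u, rfl⟩ := hu
  exact ⟨⟨_, 1 - p + ↑u⁻¹ * p, one_sub_add_mul_mul_one_sub_add_mul hp hup.units_inv_left u.mul_inv,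
    one_sub_add_mul_mul_one_sub_add_mul hp hup u.inv_mul⟩, rfl⟩

theorem mul_mul_eq_mul_of_commute {p u : R} (hp : IsIdempotentElem p) (hup : Commute u p) :
    p * u * p = u * p := by
  rw [← hup.eq, mul_assoc, hp.eq]

variable {ι : Type*} [Fintype ι] [DecidableEq ι]

-- Interpolates between `∑ i, p i` at `s = ∅` and `∑ i, u i * p i` at `s = univ`.
def fanSum (p u : ι → R) (s : Finset ι) : R :=
  ∑ i ∈ s, u i * p i + ∑ i ∈ sᶜ, p i

theorem map_fanSum {S : Type*} [Ring S] (f : R →+* S) (p u : ι → R) (s : Finset ι) :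
    f (fanSum p u s) = fanSum (f ∘ p) (f ∘ u) s := by
  simp [fanSum, map_sum]

theorem fanSum_insert {p u : ι → R} (horth : ∀ i j, p i * p j = if i = j then p i else 0)
    {k : ι} {s : Finset ι} (hk : k ∉ s) (hc : Commute (u k) (p k)) :
    fanSum p u (insert k s) = fanSum p u s * (1 - p k + u k * p k) := by
  have hpk : fanSum p u s * p k = p k := by
    have hzero : ∀ i ∈ s, u i * p i * p k = 0 := fun i hi => by
      rw [mul_assoc, horth, if_neg (ne_of_mem_of_not_mem hi hk), mul_zero]
    rw [fanSum, add_mul, Finset.sum_mul, Finset.sum_mul, Finset.sum_eq_zero hzero, zero_add]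
    simp_rw [horth]
    rw [Finset.sum_ite_eq', if_pos (Finset.mem_compl.2 hk)]
  rw [mul_add, mul_sub, mul_one, hc.eq, ← mul_assoc, hpk, ← hc.eq, fanSum, fanSum,
    Finset.sum_insert hk, Finset.compl_insert, Finset.sum_erase_eq_sub (Finset.mem_compl.2 hk)]
  abel

end FanAlgebra

section FiniteRankApproximation

variable {𝕜 E : Type*} [RCLike 𝕜] [NormedAddCommGroup E] [InnerProductSpace 𝕜 E]

theorem Submodule.norm_sub_starProjection_le (M : Submodule 𝕜 E) [M.HasOrthogonalProjection]
    (x : E) {y : E} (hy : y ∈ M) : ‖x - M.starProjection x‖ ≤ ‖x - y‖ := by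
  rw [starProjection_minimal]
  exact ciInf_le ⟨0, by rintro _ ⟨_, rfl⟩; positivity⟩ (⟨y, hy⟩ : M)

theorem IsCompactOperator.exists_finiteDimensional_range_norm_sub_lt {K : E →L[𝕜] E}
    (hK : IsCompactOperator K) {ε : ℝ} (hε : 0 < ε) :
    ∃ F : E →L[𝕜] E, FiniteDimensional 𝕜 (LinearMap.range (F : E →ₗ[𝕜] E)) ∧ ‖K - F‖ < ε := by
  obtain ⟨t, htfin, hcover⟩ := Metric.totallyBounded_iff.1
    ((hK.isCompact_closure_image_closedBall (f := (K : E →ₗ[𝕜] E)) 1).totallyBounded.subset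
      subset_closure) (ε / 2) (half_pos hε)
  let M := Submodule.span 𝕜 t
  have : FiniteDimensional 𝕜 M := FiniteDimensional.span_of_finite 𝕜 htfin
  refine ⟨M.starProjection ∘L K, Submodule.finiteDimensional_of_le (S₂ := M) ?_, ?_⟩
  · rintro _ ⟨x, rfl⟩
    exact M.starProjection_apply_mem (K x)
  refine (ContinuousLinearMap.opNorm_le_of_unit_norm (half_pos hε).le fun x hx => ?_).trans_lt
    (half_lt_self hε)
  obtain ⟨y, hyt, hy⟩ := Set.mem_iUnion₂.1 (hcover ⟨x, by simp [hx], rfl⟩)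
  calc ‖(K - M.starProjection ∘L K) x‖ = ‖K x - M.starProjection (K x)‖ := rfl
    _ ≤ ‖K x - y‖ := M.norm_sub_starProjection_le _ (Submodule.subset_span hyt)
    _ ≤ ε / 2 := by rw [← dist_eq_norm]; exact hy.le

end FiniteRankApproximation

section Calkin

variable (𝕜 E : Type*) [NontriviallyNormedField 𝕜] [NormedAddCommGroup E] [NormedSpace 𝕜 E]

def compactRingCon : RingCon (E →L[𝕜] E) where
  r S T := IsCompactOperator (S - T)
  iseqv :=
    { refl := fun _ => by simpa using isCompactOperator_zero
      symm := fun h => by simpa using h.neg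
      trans := fun h₁ h₂ => by simpa using h₁.add h₂ }
  add' h₁ h₂ := by simpa [add_sub_add_comm] using h₁.add h₂
  mul' {S S' T T'} h₁ h₂ := by
    have : S * T - S' * T' = (S - S') * T + S' * (T - T') := by noncomm_ring
    rw [this]
    exact (h₁.comp_clm T).add (h₂.continuous_comp S'.continuous)

abbrev Calkin := (compactRingCon 𝕜 E).Quotient

variable {𝕜 E}

def Calkin.mk : (E →L[𝕜] E) →+* Calkin 𝕜 E := (compactRingCon 𝕜 E).mk'

theorem Calkin.mk_eq_mk_iff {S T : E →L[𝕜] E} :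
    Calkin.mk S = Calkin.mk T ↔ IsCompactOperator (S - T) :=
  RingCon.eq _

theorem Calkin.mk_surjective : Function.Surjective (Calkin.mk : (E →L[𝕜] E) → Calkin 𝕜 E) :=
  RingCon.mk'_surjective _

theorem Calkin.commute_mk_iff {S T : E →L[𝕜] E} :
    Commute (Calkin.mk S) (Calkin.mk T) ↔ IsCompactOperator (S * T - T * S) := by
  rw [Commute, SemiconjBy, ← map_mul, ← map_mul, Calkin.mk_eq_mk_iff]

theorem Calkin.exists_mk_inverse {T : E →L[𝕜] E} (hT : IsUnit (Calkin.mk T)) :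
    ∃ S, Calkin.mk S * Calkin.mk T = 1 ∧ Calkin.mk T * Calkin.mk S = 1 := by
  obtain ⟨u, hu⟩ := hT
  obtain ⟨S, hS⟩ := Calkin.mk_surjective (↑u⁻¹ : Calkin 𝕜 E)
  exact ⟨S, by rw [hS, ← hu, u.inv_mul], by rw [hS, ← hu, u.mul_inv]⟩

theorem isUnit_mk_one_sub_add_mul {P U : E →L[𝕜] E} (hP : IsIdempotentElem P)
    (hU : IsUnit (Calkin.mk U)) (hcomm : Commute (Calkin.mk U) (Calkin.mk P)) :
    IsUnit (Calkin.mk (1 - P + U * P)) := by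
  rw [map_add, map_sub, map_one, map_mul]
  exact isUnit_one_sub_add_mul (hP.map _) hU hcomm

end Calkin

section CalkinIndex

variable {H : Type*} [NormedAddCommGroup H] [InnerProductSpace ℂ H] [CompleteSpace H]

theorem IsCompactOperator.hasFiniteIndex_and_opIndex_one_add_eq_zero {K : H →L[ℂ] H}
    (hK : IsCompactOperator K) :
    ((1 + K : H →L[ℂ] H) : H →ₗ[ℂ] H).HasFiniteIndex ∧ opIndex (1 + K) = 0 := by
  obtain ⟨F, hF, hKF⟩ := hK.exists_finiteDimensional_range_norm_sub_lt one_pos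
  let u := Units.oneSub (F - K) (by rwa [← norm_neg, neg_sub])
  have hfact : 1 + K = (u : H →L[ℂ] H) * (1 + ↑u⁻¹ * F) := by
    rw [mul_add, mul_one, ← mul_assoc, Units.mul_inv, one_mul, Units.val_oneSub]
    abel
  have : FiniteDimensional ℂ (LinearMap.range ((↑u⁻¹ * F : H →L[ℂ] H) : H →ₗ[ℂ] H)) := by
    rw [ContinuousLinearMap.toLinearMap_mul, Module.End.mul_eq_comp, LinearMap.range_comp]
    infer_instance
  obtain ⟨hfin, hindex⟩ :=
    LinearMap.hasFiniteIndex_and_index_id_add_eq_zero ((↑u⁻¹ * F : H →L[ℂ] H) : H →ₗ[ℂ] H)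
  let e := (ContinuousLinearEquiv.unitsEquiv ℂ H u).toLinearEquiv
  rw [hfact]
  refine ⟨hfin.comp e.hasFiniteIndex, (hfin.index_comp e.hasFiniteIndex).trans ?_⟩
  rw [hindex, LinearEquiv.index_eq_zero, add_zero]

theorem hasFiniteIndex_and_opIndex_eq_zero_of_mk_eq_one {T : H →L[ℂ] H}
    (hT : Calkin.mk T = 1) : (T : H →ₗ[ℂ] H).HasFiniteIndex ∧ opIndex T = 0 := by
  rw [← map_one Calkin.mk, Calkin.mk_eq_mk_iff] at hT
  simpa using hT.hasFiniteIndex_and_opIndex_one_add_eq_zero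

theorem hasFiniteIndex_of_isUnit_mk {T : H →L[ℂ] H} (hT : IsUnit (Calkin.mk T)) :
    (T : H →ₗ[ℂ] H).HasFiniteIndex := by
  obtain ⟨S, hST, hTS⟩ := Calkin.exists_mk_inverse hT
  rw [← map_mul] at hST hTS
  obtain ⟨⟨hker, -⟩, -⟩ := hasFiniteIndex_and_opIndex_eq_zero_of_mk_eq_one hST
  obtain ⟨⟨-, hcoker⟩, -⟩ := hasFiniteIndex_and_opIndex_eq_zero_of_mk_eq_one hTS
  have hrange : LinearMap.range ((T * S : H →L[ℂ] H) : H →ₗ[ℂ] H) ≤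
      LinearMap.range (T : H →ₗ[ℂ] H) :=
    LinearMap.range_comp_le_range _ _
  exact ⟨Submodule.finiteDimensional_of_le (S₂ := LinearMap.ker ((S * T : H →L[ℂ] H) : H →ₗ[ℂ] H))
      (LinearMap.ker_le_ker_comp _ _),
    Module.Finite.of_surjective _ (Submodule.factor_surjective hrange)⟩

theorem opIndex_mul_of_isUnit_mk {S T : H →L[ℂ] H} (hS : IsUnit (Calkin.mk S))
    (hT : IsUnit (Calkin.mk T)) : opIndex (S * T) = opIndex S + opIndex T :=
  (hasFiniteIndex_of_isUnit_mk hT).index_comp (hasFiniteIndex_of_isUnit_mk hS)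

theorem opIndex_eq_of_mk_eq {T T' : H →L[ℂ] H} (hT : IsUnit (Calkin.mk T))
    (h : Calkin.mk T = Calkin.mk T') : opIndex T = opIndex T' := by
  obtain ⟨S, hST, hTS⟩ := Calkin.exists_mk_inverse hT
  have hS : IsUnit (Calkin.mk S) := ⟨⟨_, _, hST, hTS⟩, rfl⟩
  have h₁ := opIndex_mul_of_isUnit_mk hS hT
  have h₂ := opIndex_mul_of_isUnit_mk hS (h ▸ hT)
  rw [(hasFiniteIndex_and_opIndex_eq_zero_of_mk_eq_one (by rwa [map_mul])).2] at h₁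
  rw [(hasFiniteIndex_and_opIndex_eq_zero_of_mk_eq_one (by rwa [map_mul, ← h])).2] at h₂
  omega

theorem opIndex_eq_sum_of_mk_eq_mul {ι : Type*} [DecidableEq ι] {c : Finset ι → H →L[ℂ] H}
    {T : ι → H →L[ℂ] H} (hT : ∀ i, IsUnit (Calkin.mk (T i))) (h₀ : Calkin.mk (c ∅) = 1)
    (hc : ∀ k s, k ∉ s → Calkin.mk (c (insert k s)) = Calkin.mk (c s * T k)) (s : Finset ι) :
    IsUnit (Calkin.mk (c s)) ∧ opIndex (c s) = ∑ i ∈ s, opIndex (T i) := by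
  induction s using Finset.induction with
  | empty => exact ⟨h₀ ▸ isUnit_one, (hasFiniteIndex_and_opIndex_eq_zero_of_mk_eq_one h₀).2⟩
  | insert k s hk ih =>
    have hunit : IsUnit (Calkin.mk (c s * T k)) := by rw [map_mul]; exact ih.1.mul (hT k)
    refine ⟨hc k s hk ▸ hunit, ?_⟩
    rw [← opIndex_eq_of_mk_eq hunit (hc k s hk).symm, opIndex_mul_of_isUnit_mk ih.1 (hT k), ih.2,
      Finset.sum_insert hk, add_comm]

end CalkinIndex

section FredholmFan

variable {H : Type*} [NormedAddCommGroup H] [InnerProductSpace ℂ H] [CompleteSpace H]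

theorem opIndex_one_sub_add_mul_eq_opIndex_compression {P U : H →L[ℂ] H}
    (hP : IsIdempotentElem P) (hU : IsUnit (Calkin.mk U))
    (hcomm : Commute (Calkin.mk U) (Calkin.mk P)) :
    opIndex (1 - P + U * P) = opIndex ((P.comp (U.comp
      (LinearMap.range (P : H →ₗ[ℂ] H)).subtypeL)).codRestrict (LinearMap.range (P : H →ₗ[ℂ] H))
      fun _ => LinearMap.mem_range_self (P : H →ₗ[ℂ] H) _) := by
  refine (opIndex_eq_of_mk_eq (isUnit_mk_one_sub_add_mul hP hU hcomm) ?_).trans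
    (opIndex_one_sub_add_mul_mul U hP)
  simp only [map_add, map_sub, map_one, map_mul, mul_mul_eq_mul_of_commute (hP.map _) hcomm]

theorem opIndex_sum_mul_eq_sum {ι : Type*} [Fintype ι] [DecidableEq ι] {P U : ι → H →L[ℂ] H}
    (horth : ∀ i j, P i * P j = if i = j then P i else 0) (hsum : ∑ i, P i = 1)
    (hU : ∀ i, IsUnit (Calkin.mk (U i)))
    (hcomm : ∀ i, Commute (Calkin.mk (U i)) (Calkin.mk (P i))) :
    opIndex (∑ i, U i * P i) = ∑ i, opIndex (1 - P i + U i * P i) := by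
  have hidem : ∀ i, IsIdempotentElem (P i) := fun i => (horth i i).trans (if_pos rfl)
  have horth' : ∀ i j, (Calkin.mk ∘ P) i * (Calkin.mk ∘ P) j =
      if i = j then (Calkin.mk ∘ P) i else 0 := fun i j => by
    simp only [Function.comp, ← map_mul, horth]
    split_ifs <;> simp
  have hfan := opIndex_eq_sum_of_mk_eq_mul (c := fanSum P U)
    (fun i => isUnit_mk_one_sub_add_mul (hidem i) (hU i) (hcomm i)) (by simp [fanSum, hsum])
    (fun k s hk => by
      rw [map_fanSum, fanSum_insert horth' hk (hcomm k), map_mul, map_fanSum, map_add, map_sub,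
        map_one, map_mul]
      rfl)
    Finset.univ
  simpa [fanSum] using hfan.2

end FredholmFan

/-- for a Fredholm fan, ind(∑ᵢ ΨᵢPᵢ) = ∑ᵢ ind(PᵢΨᵢ|_{Hᵢ} : Hᵢ → Hᵢ)
= ∑ᵢ ind(Pᵢ|_{Lᵢ} : Lᵢ → Hᵢ). -/
theorem stmt14 {H : Type*} [NormedAddCommGroup H] [InnerProductSpace ℂ H] [CompleteSpace H]
    (n : ℕ) (P : Fin n → (H →L[ℂ] H)) (Ψ : Fin n → (H ≃L[ℂ] H))
    (hsum : ∑ i, P i = 1)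
    (horth : ∀ i j, P i ∘L P j = if i = j then P i else 0)
    (hcomm : ∀ i j, IsCompactOperator
      (((Ψ i : H →L[ℂ] H) ∘L P j - P j ∘L (Ψ i : H →L[ℂ] H) : H →L[ℂ] H)))
    (L : Fin n → Submodule ℂ H)
    (hL : ∀ i, L i = (LinearMap.range (P i : H →ₗ[ℂ] H)).map
      (((Ψ i : H →L[ℂ] H)) : H →ₗ[ℂ] H)) :
    opIndex (∑ i, (Ψ i : H →L[ℂ] H) ∘L P i) =
        ∑ i, opIndex (((P i).comp ((Ψ i : H →L[ℂ] H).comp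
          (LinearMap.range (P i : H →ₗ[ℂ] H)).subtypeL)).codRestrict (LinearMap.range (P i : H →ₗ[ℂ] H))
          (fun x => LinearMap.mem_range_self (P i : H →ₗ[ℂ] H)
            ((Ψ i : H →L[ℂ] H) ((LinearMap.range (P i : H →ₗ[ℂ] H)).subtypeL x)))) ∧
      opIndex (∑ i, (Ψ i : H →L[ℂ] H) ∘L P i) =
        ∑ i, opIndex (((P i).comp (L i).subtypeL).codRestrict (LinearMap.range (P i : H →ₗ[ℂ] H))
          (fun x => LinearMap.mem_range_self (P i : H →ₗ[ℂ] H) ((L i).subtypeL x))) := by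
  obtain rfl : L = fun i => (LinearMap.range (P i : H →ₗ[ℂ] H)).map
      ((Ψ i : H →L[ℂ] H) : H →ₗ[ℂ] H) := funext hL
  have hidem : ∀ i, IsIdempotentElem (P i) := fun i => (horth i i).trans (if_pos rfl)
  have hunit : ∀ i, IsUnit (Calkin.mk (Ψ i : H →L[ℂ] H)) := fun i =>
    ((ContinuousLinearEquiv.unitsEquiv ℂ H).symm (Ψ i)).isUnit.map _
  have hcomm' : ∀ i, Commute (Calkin.mk (Ψ i : H →L[ℂ] H)) (Calkin.mk (P i)) := fun i =>
    Calkin.commute_mk_iff.2 (hcomm i i)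
  have hfan : opIndex (∑ i, (Ψ i : H →L[ℂ] H) ∘L P i) =
      ∑ i, opIndex (1 - P i + (Ψ i : H →L[ℂ] H) * P i) :=
    opIndex_sum_mul_eq_sum horth hsum hunit hcomm'
  have hcompression := fun i =>
    opIndex_one_sub_add_mul_eq_opIndex_compression (hidem i) (hunit i) (hcomm' i)
  refine ⟨hfan.trans (Finset.sum_congr rfl fun i _ => hcompression i),
    hfan.trans (Finset.sum_congr rfl fun i _ => (hcompression i).trans ?_)⟩
  exact LinearMap.index_eq_of_eq_comp_linearEquiv
    ((Ψ i).toLinearEquiv.submoduleMap (LinearMap.range (P i : H →ₗ[ℂ] H))) rfl
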